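/- arXiv:1011.5045 — 2 statements merged into one kernel-verified Lean document; each statement's English description precedes it below -/
import Mathlib

section
/- If λ and λ' are partitions of n with λ ⪯ λ', then λ ≤ λ' in the dominance order; that is, the criterion ⪯ (characterizing inclusion of sheet closures in sl_n) implies the dominance criterion (characterizing inclusion of nilpotent orbit closures). -/
open Finset

/-- The `i`-th part (for `1 ≤ i`) of the dual partition `λ̃` of a partition `λ`:
`λ̃ᵢ = #{j : λⱼ ≥ i}`. -/
def dualPart {n : ℕ} (P : n.Partition) (i : ℕ) : ℕ :=
  (P.parts.filter (fun a => i ≤ a)).card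

/-- The number of parts of the dual partition, i.e. the largest part `λ₁` of `λ`. -/
def numDualParts {n : ℕ} (P : n.Partition) : ℕ :=
  P.parts.sup

/-- `Prec P Q` (written `λ ⪯ λ'` in the paper): there is a partition `(Jᵢ)` of the
index set `{1, …, p'}` of the dual partition of `λ'` into pairwise disjoint
nonempty subsets, indexed by the index set `{1, …, p}` of the dual partition of
`λ`, such that `λ̃ᵢ = ∑_{j ∈ Jᵢ} λ̃'ⱼ` for all `i`. -/
def Prec {n m : ℕ} (P : n.Partition) (Q : m.Partition) : Prop :=
  ∃ J : Fin (numDualParts P) → Finset (Fin (numDualParts Q)),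
    (∀ i i', i ≠ i' → Disjoint (J i) (J i')) ∧
    (∀ i, (J i).Nonempty) ∧
    (∀ j, ∃ i, j ∈ J i) ∧
    ∀ i, dualPart P (i.val + 1) = ∑ j ∈ J i, dualPart Q (j.val + 1)

/-- The sum of the `m` largest parts of a partition. -/
def topSum {n : ℕ} (P : n.Partition) (m : ℕ) : ℕ :=
  ((P.parts.sort (· ≥ ·)).take m).sum

/-- The dominance order: `λ ≤ λ'` iff for every `m`,
`λ₁ + ⋯ + λₘ ≤ λ'₁ + ⋯ + λ'ₘ`. -/
def DomLE {n : ℕ} (P Q : n.Partition) : Prop :=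
  ∀ m : ℕ, topSum P m ≤ topSum Q m

/-!
The sum of the `m` largest parts of `λ` counts the boxes in the first `m` rows of its Young
diagram; counting column by column instead, it is `∑ᵢ min (λ̃ᵢ, m)`. Since `x ↦ min x m` is
subadditive, replacing each column `λ̃ᵢ = ∑_{j ∈ Jᵢ} λ̃'ⱼ` by the columns `λ̃'ⱼ` it is made of can
only increase this sum, and disjointness of the `Jᵢ` means no column of `λ'` is used twice.
-/

lemma sum_range_boole_lt (a K : ℕ) :
    ∑ c ∈ range K, (if c < a then 1 else 0) = min a K := by
  induction K with
  | zero => simp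
  | succ K ih => rw [sum_range_succ, ih]; split <;> omega

lemma List.sum_eq_sum_range_countP_lt (l : List ℕ) {K : ℕ} (h : ∀ a ∈ l, a ≤ K) :
    l.sum = ∑ c ∈ Finset.range K, l.countP (fun a => c < a) := by
  induction l with
  | nil => simp
  | cons a l ih =>
    have ha : ∑ c ∈ Finset.range K, (if c < a then 1 else 0) = a := by
      rw [sum_range_boole_lt, min_eq_left (h a List.mem_cons_self)]
    simp only [List.sum_cons, List.countP_cons, decide_eq_true_eq, sum_add_distrib, ha,
      ih fun b hb => h b (List.mem_cons_of_mem _ hb)]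
    omega

/-- If the elements satisfying `p` form an initial segment of `l`, then among the first `m`
elements exactly `min (l.countP p) m` satisfy `p`. -/
lemma List.countP_take_of_pairwise {α : Type*} (p : α → Bool) {l : List α}
    (hl : l.Pairwise fun a b => p b → p a) (m : ℕ) :
    (l.take m).countP p = min (l.countP p) m := by
  induction l generalizing m with
  | nil => simp
  | cons a l ih =>
    rw [List.pairwise_cons] at hl
    cases m with
    | zero => simp
    | succ m =>
      by_cases hpa : p a
      · simp only [List.take_succ_cons, List.countP_cons, hpa, if_true, ih hl.2 m]
        omega
      · have hl' : l.countP p = 0 :=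
          List.countP_eq_zero.mpr fun b hb hpb => hpa (hl.1 b hb hpb)
        have htake : (l.take m).countP p = 0 :=
          List.countP_eq_zero.mpr fun b hb hpb => hpa (hl.1 b (List.mem_of_mem_take hb) hpb)
        simp [hpa, hl', htake]

lemma topSum_eq_sum_min_dualPart {n : ℕ} (P : n.Partition) (m : ℕ) :
    topSum P m = ∑ i : Fin (numDualParts P), min (dualPart P (i + 1)) m := by
  set L := P.parts.sort (· ≥ ·)
  have hdual : ∀ c, dualPart P c = L.countP (fun a => c ≤ a) := by
    intro c
    rw [dualPart, ← Multiset.countP_eq_card_filter, ← Multiset.coe_countP, Multiset.sort_eq]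
  have hle : ∀ a ∈ L.take m, a ≤ numDualParts P := fun a ha =>
    Multiset.le_sup ((Multiset.mem_sort _).mp (List.mem_of_mem_take ha))
  have hsorted (c : ℕ) : L.Pairwise fun a b => decide (c ≤ b) → decide (c ≤ a) :=
    (P.parts.pairwise_sort (· ≥ ·)).imp fun hab hcb => by simp only [decide_eq_true_eq] at *; omega
  rw [topSum, List.sum_eq_sum_range_countP_lt _ hle, ← Fin.sum_univ_eq_sum_range]
  refine sum_congr rfl fun i _ => ?_
  rw [hdual, ← List.countP_take_of_pairwise _ (hsorted _)]
  rfl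

lemma min_sum_le_sum_min {ι : Type*} (s : Finset ι) (f : ι → ℕ) (m : ℕ) :
    min (∑ j ∈ s, f j) m ≤ ∑ j ∈ s, min (f j) m :=
  le_sum_of_subadditive (fun x => min x m) (by simp) (fun x y => by omega) s f

lemma sum_min_le_sum_min_of_disjoint {ι κ : Type*} [Fintype ι] [Fintype κ]
    (J : ι → Finset κ) (hJ : ∀ i i', i ≠ i' → Disjoint (J i) (J i'))
    (f : ι → ℕ) (g : κ → ℕ) (hfg : ∀ i, f i = ∑ j ∈ J i, g j) (m : ℕ) :
    ∑ i, min (f i) m ≤ ∑ j, min (g j) m := by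
  classical
  calc ∑ i, min (f i) m
      ≤ ∑ i, ∑ j ∈ J i, min (g j) m :=
        sum_le_sum fun i _ => hfg i ▸ min_sum_le_sum_min (J i) g m
    _ = ∑ j ∈ univ.biUnion J, min (g j) m :=
        (sum_biUnion fun i _ i' _ hii' => hJ i i' hii').symm
    _ ≤ ∑ j, min (g j) m := sum_le_sum_of_subset (subset_univ _)

/-- The criterion `⪯` (characterizing inclusion of sheet closures in `sl n`)
implies the dominance criterion (characterizing inclusion of nilpotent orbit
closures): if `λ ⪯ λ'` then `λ ≤ λ'` in the dominance order. -/
theorem prec_implies_domLE {n : ℕ} (P Q : n.Partition)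
    (h : Prec P Q) : DomLE P Q := by
  obtain ⟨J, hdisj, -, -, hsum⟩ := h
  intro m
  rw [topSum_eq_sum_min_dualPart, topSum_eq_sum_min_dualPart]
  exact sum_min_le_sum_min_of_disjoint J hdisj _ _ hsum m
end

section
/- The relation ⪯ is strictly stronger than the dominance order: there exist partitions λ and λ' of the same integer n such that λ ≤ λ' in the dominance order but λ ⪯ λ' fails. -/
open Finset

lemma topSum_eq_sum_take {n : ℕ} (P : n.Partition) {l : List ℕ} (hl : l.Pairwise (· ≥ ·))
    (hP : P.parts = l) (m : ℕ) : topSum P m = (l.take m).sum := by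
  rw [topSum, hP, Multiset.coe_sort, List.mergeSort_eq_self (r := (· ≥ ·)) hl]

lemma Prec.exists_dualPart_le {n m : ℕ} {P : n.Partition} {Q : m.Partition} (h : Prec P Q)
    (i : Fin (numDualParts P)) :
    ∃ j : Fin (numDualParts Q), dualPart Q (j.val + 1) ≤ dualPart P (i.val + 1) := by
  obtain ⟨J, -, hne, -, hsum⟩ := h
  obtain ⟨j, hj⟩ := hne i
  exact ⟨j, hsum i ▸ single_le_sum (f := fun j : Fin (numDualParts Q) => dualPart Q (j.val + 1))
    (fun _ _ => Nat.zero_le _) hj⟩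

/-- Its dual partition is `(3, 1)`. -/
def partition211 : Nat.Partition 4 := ⟨{2, 1, 1}, by decide, by decide⟩

/-- Its dual partition is `(2, 2)`. -/
def partition22 : Nat.Partition 4 := ⟨{2, 2}, by decide, by decide⟩

lemma domLE_partition211_partition22 : DomLE partition211 partition22 := by
  intro m
  rw [topSum_eq_sum_take _ (l := [2, 1, 1]) (by decide) rfl,
    topSum_eq_sum_take _ (l := [2, 2]) (by decide) rfl]
  match m with
  | 0 | 1 | 2 => decide
  | k + 3 => simp

-- `λ̃₂ = 1` is smaller than every part of `λ̃'`, so it is not a sum of a nonempty set of them.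
lemma not_prec_partition211_partition22 : ¬ Prec partition211 partition22 := fun h => by
  obtain ⟨j, hj⟩ := h.exists_dualPart_le ⟨1, by decide⟩
  revert hj
  fin_cases j <;> decide

/-- The relation `⪯` is strictly stronger than the dominance order: there exist
partitions `λ`, `λ'` of the same integer `n` with `λ ≤ λ'` in the dominance
order but not `λ ⪯ λ'`. -/
theorem exists_domLE_not_prec :
    ∃ (n : ℕ) (P Q : n.Partition), DomLE P Q ∧ ¬ Prec P Q :=
  ⟨4, partition211, partition22, domLE_partition211_partition22,
    not_prec_partition211_partition22⟩
end
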